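/- arXiv:2204.05812 — 7 statements merged into one kernel-verified Lean document; each statement's English description precedes it below -/
import Mathlib

section
/- The closest Toeplitz matrix (in the Frobenius norm) to a symmetric positive definite matrix need not be positive semidefinite. Concretely, for A = [[100, 99, 0], [99, 100, 1/2], [0, 1/2, 1]], A is symmetric positive definite, but the Toeplitz matrix T = [[67, 49.75, 0], [49.75, 67, 49.75], [0, 49.75, 67]] obtained by diagonal averaging of A is indefinite (it has a negative eigenvalue). -/
open Matrix Real Finset

/-- Squared Frobenius norm of a real square matrix. -/
def frobSq {n : ℕ} (A : Matrix (Fin n) (Fin n) ℝ) : ℝ := ∑ i, ∑ j, (A i j)^2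

/-- A matrix is Toeplitz if its entries are constant along diagonals. -/
def IsToeplitz {n : ℕ} (A : Matrix (Fin n) (Fin n) ℝ) : Prop :=
  ∀ i j i' j' : Fin n, (i : ℤ) - (j : ℤ) = (i' : ℤ) - (j' : ℤ) → A i j = A i' j'

/-- The (2k+1)-banded Toeplitz matrix (n;k;σ,δ,τ): subdiagonals σ₁,…,σ_k,
diagonal δ, superdiagonals τ₁,…,τ_k. -/
def bandedToeplitz (n k : ℕ) (σ τ : ℕ → ℝ) (δ : ℝ) : Matrix (Fin n) (Fin n) ℝ :=
  Matrix.of fun i j =>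
    if (i : ℕ) = (j : ℕ) then δ
    else if (j : ℕ) < (i : ℕ) ∧ (i : ℕ) - (j : ℕ) ≤ k then σ ((i : ℕ) - (j : ℕ))
    else if (i : ℕ) < (j : ℕ) ∧ (j : ℕ) - (i : ℕ) ≤ k then τ ((j : ℕ) - (i : ℕ))
    else 0

/-- The tridiagonal Toeplitz matrix (n;1;σ₁,δ,τ₁). -/
def triToeplitz (n : ℕ) (σ₁ δ τ₁ : ℝ) : Matrix (Fin n) (Fin n) ℝ :=
  bandedToeplitz n 1 (fun _ => σ₁) (fun _ => τ₁) δ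

/-- Diagonal averaging of a matrix. -/
noncomputable def diagAvg {n : ℕ} (A : Matrix (Fin n) (Fin n) ℝ) : Matrix (Fin n) (Fin n) ℝ :=
  Matrix.of fun i j =>
    (∑ p : Fin n × Fin n, if (p.1 : ℤ) - (p.2 : ℤ) = (i : ℤ) - (j : ℤ) then A p.1 p.2 else 0) /
    (∑ p : Fin n × Fin n, if (p.1 : ℤ) - (p.2 : ℤ) = (i : ℤ) - (j : ℤ) then (1 : ℝ) else 0)

/-!
Gershgorin's theorem places every eigenvalue of the strictly diagonally dominant matrix `A`
with positive diagonal in `(0, ∞)`. Averaging along diagonals lowers the main diagonal to `67`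
but spreads the strong coupling `99` over both superdiagonal positions, so that
`det T = 67 (67² - 2 · 49.75²) < 0` while `trace T = 201 > 0`; for a symmetric matrix the first
forces a negative eigenvalue and the second a positive one.
-/

namespace Matrix

variable {n : Type*} [Fintype n] [DecidableEq n] {A : Matrix n n ℝ}

theorem IsHermitian.posDef_of_sum_row_lt_diag (hA : A.IsHermitian)
    (h : ∀ k, ∑ j ∈ univ.erase k, |A k j| < A k k) : A.PosDef := by
  rw [hA.posDef_iff_eigenvalues_pos]
  intro i
  have hμ : Module.End.HasEigenvalue (toLin' A) (hA.eigenvalues i) := by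
    rw [Module.End.hasEigenvalue_iff_mem_spectrum, spectrum_toLin']
    exact hA.eigenvalues_mem_spectrum_real i
  obtain ⟨k, hk⟩ := eigenvalue_mem_ball hμ
  simp only [Metric.mem_closedBall, Real.dist_eq, Real.norm_eq_abs] at hk
  linarith [h k, neg_abs_le (hA.eigenvalues i - A k k)]

theorem IsHermitian.exists_eigenvalues_neg_of_det_neg (hA : A.IsHermitian) (h : A.det < 0) :
    ∃ i, hA.eigenvalues i < 0 := by
  by_contra! hnonneg
  exact h.not_ge (hA.posSemidef_iff_eigenvalues_nonneg.mpr hnonneg).det_nonneg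

theorem IsHermitian.exists_eigenvalues_pos_of_trace_pos (hA : A.IsHermitian) (h : 0 < A.trace) :
    ∃ i, 0 < hA.eigenvalues i := by
  by_contra! hnonpos
  have htrace : A.trace = ∑ i, hA.eigenvalues i := by simpa using hA.trace_eq_sum_eigenvalues
  exact h.not_ge (htrace ▸ sum_nonpos fun i _ => hnonpos i)

end Matrix

/-- the closest Toeplitz matrix to a symmetric positive definite matrix
need not be positive semidefinite. -/
theorem diag_average_of_posdef_can_be_indefinite :
    (!![100, 99, 0; 99, 100, 1/2; 0, 1/2, 1] : Matrix (Fin 3) (Fin 3) ℝ).PosDef ∧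
    diagAvg (!![100, 99, 0; 99, 100, 1/2; 0, 1/2, 1] : Matrix (Fin 3) (Fin 3) ℝ) =
      (!![67, 49.75, 0; 49.75, 67, 49.75; 0, 49.75, 67] : Matrix (Fin 3) (Fin 3) ℝ) ∧
    ∃ hT : (!![67, 49.75, 0; 49.75, 67, 49.75; 0, 49.75, 67] :
        Matrix (Fin 3) (Fin 3) ℝ).IsHermitian,
      (∃ i, hT.eigenvalues i < 0) ∧ (∃ j, 0 < hT.eigenvalues j) := by
  have hA : (!![100, 99, 0; 99, 100, 1/2; 0, 1/2, 1] : Matrix (Fin 3) (Fin 3) ℝ).IsHermitian := by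
    ext i j
    fin_cases i <;> fin_cases j <;> simp
  have hT : (!![67, 49.75, 0; 49.75, 67, 49.75; 0, 49.75, 67] :
      Matrix (Fin 3) (Fin 3) ℝ).IsHermitian := by
    ext i j
    fin_cases i <;> fin_cases j <;> simp
  refine ⟨hA.posDef_of_sum_row_lt_diag ?dominant, ?average, hT,
    hT.exists_eigenvalues_neg_of_det_neg ?det, hT.exists_eigenvalues_pos_of_trace_pos ?trace⟩
  case dominant =>
    intro k
    rw [sum_erase_eq_sub (mem_univ k), Fin.sum_univ_three]
    fin_cases k <;> simp <;> norm_num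
  case average =>
    ext i j
    fin_cases i <;> fin_cases j <;>
      simp only [diagAvg, of_apply, Fintype.sum_prod_type, Fin.sum_univ_three] <;> simp <;> norm_num
  case det => simp [det_fin_three]; norm_num
  case trace => simp [trace_fin_three]; norm_num
end

section
/- For any real n×n matrix A with symmetric part B = (A + Aᵀ)/2 and skew-symmetric part C = (A − Aᵀ)/2, the squared Frobenius distance from A to the set of symmetric positive semidefinite matrices equals Σ_{λ_i(B) < 0} λ_i(B)² + ‖C‖_F², where λ_i(B) are the eigenvalues of B. -/
open Matrix Real Finset

/-!
Write `A = B + C` with `B` symmetric and `C` skew-symmetric. Symmetric and skew-symmetric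
matrices are Frobenius-orthogonal, so for symmetric `P` we have `‖P - A‖² = ‖P - B‖² + ‖C‖²` and
it remains to find the distance from `B` to the positive semidefinite cone. Conjugating by an
orthogonal matrix diagonalising `B` turns `‖P - B‖²` into `‖M - diag λ‖²` with `M` positive
semidefinite; this is at least `∑ (M i i - λ i)² ≥ ∑_{λ i < 0} λ i²` because `M i i ≥ 0`, with
equality at `M = diag (max λ 0)`.
-/

section FrobSq

variable {n : ℕ}

lemma frobSq_eq_trace (M : Matrix (Fin n) (Fin n) ℝ) : frobSq M = (Mᴴ * M).trace := by
  simp only [frobSq, trace, Matrix.diag, mul_apply, conjTranspose_apply, star_trivial, sq]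
  exact sum_comm

@[simp]
lemma frobSq_neg (M : Matrix (Fin n) (Fin n) ℝ) : frobSq (-M) = frobSq M := by
  simp [frobSq]

lemma frobSq_diagonal (d : Fin n → ℝ) : frobSq (diagonal d) = ∑ i, d i ^ 2 := by
  refine sum_congr rfl fun i _ => ?_
  rw [sum_eq_single i (fun j _ hj => by simp [diagonal_apply_ne _ hj.symm]) (by simp)]
  simp

lemma frobSq_conj_of_mem_unitary {U : Matrix (Fin n) (Fin n) ℝ} (hU : U ∈ unitary _)
    (X : Matrix (Fin n) (Fin n) ℝ) : frobSq (U * X * star U) = frobSq X := by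
  have hUU : star U * U = 1 := Unitary.star_mul_self_of_mem hU
  have h : star (U * X * star U) * (U * X * star U) = U * (star X * X) * star U := by
    simp only [star_mul, star_star, Matrix.mul_assoc]
    rw [← Matrix.mul_assoc (star U) U, hUU, Matrix.one_mul]
  rw [frobSq_eq_trace, frobSq_eq_trace, ← star_eq_conjTranspose, ← star_eq_conjTranspose, h,
    trace_mul_comm, ← Matrix.mul_assoc, hUU, Matrix.one_mul]

lemma frobSq_add_of_isHermitian_of_conjTranspose_eq_neg {X Y : Matrix (Fin n) (Fin n) ℝ}
    (hX : X.IsHermitian) (hY : Yᴴ = -Y) : frobSq (X + Y) = frobSq X + frobSq Y := by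
  simp only [frobSq_eq_trace, conjTranspose_add, hX.eq, hY, Matrix.add_mul, Matrix.mul_add,
    trace_add, Matrix.neg_mul, trace_neg, trace_mul_comm Y X]
  ring

lemma frobSq_sub_eq_sub_symm_add_skew {P : Matrix (Fin n) (Fin n) ℝ} (hP : P.IsHermitian)
    (A : Matrix (Fin n) (Fin n) ℝ) :
    frobSq (P - A) = frobSq (P - ((1:ℝ)/2) • (A + Aᵀ)) + frobSq (((1:ℝ)/2) • (A - Aᵀ)) := by
  have hB : (((1:ℝ)/2) • (A + Aᵀ)).IsHermitian := by
    ext i j; simp; ring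
  have hC : (-(((1:ℝ)/2) • (A - Aᵀ)))ᴴ = -(-(((1:ℝ)/2) • (A - Aᵀ))) := by
    ext i j; simp; ring
  rw [← frobSq_neg (((1:ℝ)/2) • (A - Aᵀ)), ← frobSq_add_of_isHermitian_of_conjTranspose_eq_neg
    (hP.sub hB) hC]
  congr 1
  ext i j; simp; ring

lemma sum_sq_neg_le_frobSq_sub_diagonal {M : Matrix (Fin n) (Fin n) ℝ} (hM : M.PosSemidef)
    (d : Fin n → ℝ) : (∑ i, if d i < 0 then d i ^ 2 else 0) ≤ frobSq (M - diagonal d) :=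
  calc (∑ i, if d i < 0 then d i ^ 2 else 0)
      ≤ ∑ i, (M i i - d i) ^ 2 := sum_le_sum fun i _ => by
        have := hM.diag_nonneg (i := i)
        split_ifs <;> nlinarith
    _ ≤ frobSq (M - diagonal d) := sum_le_sum fun i _ => by
        simpa using single_le_sum (f := fun j => ((M - diagonal d) i j) ^ 2)
          (fun j _ => sq_nonneg _) (mem_univ i)

end FrobSq

theorem Matrix.IsHermitian.isLeast_frobSq_posSemidef_sub {n : ℕ} {B : Matrix (Fin n) (Fin n) ℝ}
    (hB : B.IsHermitian) :
    IsLeast {d | ∃ P : Matrix (Fin n) (Fin n) ℝ, P.PosSemidef ∧ d = frobSq (P - B)}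
      (∑ i, if hB.eigenvalues i < 0 then hB.eigenvalues i ^ 2 else 0) := by
  set U := hB.eigenvectorUnitary
  set ev := hB.eigenvalues
  have hspec : B = U * diagonal ev * star (U : Matrix (Fin n) (Fin n) ℝ) := by
    simpa using hB.spectral_theorem
  have hdiag : star (U : Matrix (Fin n) (Fin n) ℝ) * B * U = diagonal ev := by
    simpa using hB.conjStarAlgAut_star_eigenvectorUnitary
  constructor
  · refine ⟨U * diagonal (fun i => max (ev i) 0) * star (U : Matrix (Fin n) (Fin n) ℝ),
      (PosSemidef.diagonal fun i => le_max_right _ _).mul_mul_conjTranspose_same _, ?_⟩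
    rw [hspec, ← Matrix.sub_mul, ← Matrix.mul_sub, diagonal_sub, frobSq_conj_of_mem_unitary U.2,
      frobSq_diagonal]
    refine sum_congr rfl fun i _ => ?_
    split_ifs with h
    · rw [max_eq_right h.le]; ring
    · rw [max_eq_left (not_lt.mp h)]; ring
  · rintro _ ⟨P, hP, rfl⟩
    rw [← frobSq_conj_of_mem_unitary (Unitary.star_mem U.2), star_star, Matrix.mul_sub,
      Matrix.sub_mul, hdiag]
    exact sum_sq_neg_le_frobSq_sub_diagonal (hP.conjTranspose_mul_mul_same _) ev

/-- the squared Frobenius distance from `A` to the set of symmetric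
positive semidefinite matrices equals the sum of the squares of the negative
eigenvalues of the symmetric part plus the squared Frobenius norm of the
skew-symmetric part. -/
theorem sq_dist_to_psd {n : ℕ} (A : Matrix (Fin n) (Fin n) ℝ)
    (hB : (((1:ℝ)/2) • (A + Aᵀ)).IsHermitian) :
    sInf {d : ℝ | ∃ E : Matrix (Fin n) (Fin n) ℝ, (A + E).PosSemidef ∧ d = frobSq E} =
      (∑ i, if hB.eigenvalues i < 0 then (hB.eigenvalues i)^2 else 0) +
        frobSq (((1:ℝ)/2) • (A - Aᵀ)) := by
  obtain ⟨⟨P, hP, hPd⟩, hlb⟩ := hB.isLeast_frobSq_posSemidef_sub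
  refine IsLeast.csInf_eq ⟨⟨P - A, by rwa [add_sub_cancel], ?_⟩, ?_⟩
  · rw [frobSq_sub_eq_sub_symm_add_skew hP.isHermitian, hPd]
  · rintro _ ⟨E, hE, rfl⟩
    rw [← add_sub_cancel_left A E, frobSq_sub_eq_sub_symm_add_skew hE.isHermitian]
    gcongr
    exact hlb ⟨A + E, hE, rfl⟩
end

section
/- A real (2k+1)-banded Toeplitz matrix T = (n; k; σ, δ, τ) of order n with k ≤ ⌊n/2⌋ is normal (T Tᵀ = Tᵀ T) if and only if T is symmetric or T − δI is skew-symmetric. -/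
open Matrix Real Finset

/-!
Write `T = (a (i - j))` with symbol `a` supported in `[-k, k]`. When column `j` is not among
the last `k`, the entries `(i, j)` of `T Tᵀ` and of `Tᵀ T` differ from the same bi-infinite
autocorrelation sum only by the terms that fall off the top-left corner, so normality gives the corner identities
`∑_{t<k} a(u+t) a(v+t) = ∑_{t<k} a(-(u+t)) a(-(v+t))` for `1 ≤ u, v ≤ k` (here `2k ≤ n` is
used). Telescoping in `(u, v) ↦ (u+1, v+1)` yields `σ_u σ_v = τ_u τ_v` for all `u, v`, and such
a rank-one identity forces `σ = τ` or `σ = -τ` on `[1, k]`.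
-/

def toeplitz {R : Type*} (n : ℕ) (a : ℤ → R) : Matrix (Fin n) (Fin n) R :=
  of fun i j => a ((i : ℤ) - j)

theorem eq_zero_of_sum_range_diag_eq_zero {M : Type*} [AddCommGroup M] {k : ℕ}
    {D : ℕ → ℕ → M} (hD : ∀ u v, k ≤ u ∨ k ≤ v → D u v = 0)
    (hsum : ∀ u v, u < k → v < k → ∑ t ∈ range k, D (u + t) (v + t) = 0) (u v : ℕ) :
    D u v = 0 := by
  have hsum' : ∀ u v, ∑ t ∈ range k, D (u + t) (v + t) = 0 := by
    intro u v
    by_cases huv : u < k ∧ v < k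
    · exact hsum u v huv.1 huv.2
    · exact sum_eq_zero fun t _ => hD _ _ (by omega)
  have hshift : ∑ t ∈ range k, D (u + (t + 1)) (v + (t + 1)) = 0 := by
    simpa only [add_assoc, add_comm 1] using hsum' (u + 1) (v + 1)
  have htel := (sum_range_succ' (fun t => D (u + t) (v + t)) k).symm.trans
    (sum_range_succ (fun t => D (u + t) (v + t)) k)
  simpa only [hshift, hsum', hD (u + k) (v + k) (by omega), add_zero, zero_add] using htel

theorem eqOn_or_eqOn_neg_of_mul_eq_mul {ι R : Type*} [CommRing R] [IsDomain R] {f g : ι → R}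
    {s : Set ι} (h : ∀ u ∈ s, ∀ v ∈ s, f u * f v = g u * g v) :
    s.EqOn f g ∨ s.EqOn f (-g) := by
  refine or_iff_not_imp_left.2 fun hfg => ?_
  obtain ⟨u, hu, hfgu⟩ : ∃ u ∈ s, f u ≠ g u := by simpa [Set.EqOn] using hfg
  have hfu : f u = -g u := (mul_self_eq_mul_self_iff.1 (h u hu u hu)).resolve_left hfgu
  have hfu0 : f u ≠ 0 := fun h0 => hfgu (by rw [h0, eq_comm, ← neg_eq_zero, ← hfu, h0])
  intro v hv
  apply mul_right_cancel₀ hfu0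
  rw [h v hv u hu, hfu, Pi.neg_apply]
  ring

theorem mul_transpose_eq_transpose_mul_of_sub_smul_one_skew {m R : Type*} [Fintype m]
    [DecidableEq m] [CommRing R] {A : Matrix m m R} {c : R} (h : (A - c • 1)ᵀ = -(A - c • 1)) :
    A * Aᵀ = Aᵀ * A := by
  have hAt : Aᵀ = (2 * c) • 1 - A := by
    rw [transpose_sub, transpose_smul, transpose_one, sub_eq_iff_eq_add] at h
    rw [h]
    module
  rw [hAt]
  exact ((Commute.one_right A).smul_right _).sub_right (Commute.refl A)

section Toeplitz

variable {R : Type*} {n k : ℕ} {a : ℤ → R}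

theorem toeplitz_mul_transpose_apply_add_sum [CommSemiring R]
    (ha : Function.support a ⊆ Set.Icc (-k) k) (i j : Fin n) (hj : (j : ℕ) + k < n) :
    (toeplitz n a * (toeplitz n a)ᵀ) i j + ∑ t ∈ range k, a (i + 1 + t) * a (j + 1 + t) =
      ((toeplitz n a)ᵀ * toeplitz n a) i j +
        ∑ t ∈ range k, a (-(i + 1 + t)) * a (-(j + 1 + t)) := by
  have hsupp : ∀ {m}, a m ≠ 0 → -(k : ℤ) ≤ m ∧ m ≤ k := fun hm => ha hm
  -- both sides, extended to rows/columns `-k, …, n-1`, are exchanged by the reflection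
  -- `x ↦ i + j + 2k - x` of the shifted summation index `x = l + k`
  set F : ℕ → R := fun x => a (i + k - x) * a (j + k - x) with hF
  set G : ℕ → R := fun x => a (x - k - i) * a (x - k - j) with hG
  have hwin : ∑ x ∈ range (k + n), F x = ∑ x ∈ range (k + n), G x := by
    refine sum_bij_ne_zero (fun x _ _ => i + j + 2 * k - x) ?_ ?_ ?_ ?_
    · intro x hx hFx
      have h₁ := hsupp (left_ne_zero_of_mul hFx)
      have h₂ := hsupp (right_ne_zero_of_mul hFx)
      simp only [mem_range] at hx ⊢
      omega
    · intro x₁ _ hF₁ x₂ _ hF₂ h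
      have h₁ := hsupp (left_ne_zero_of_mul hF₁)
      have h₂ := hsupp (left_ne_zero_of_mul hF₂)
      omega
    · intro y hy hGy
      have h₁ := hsupp (left_ne_zero_of_mul hGy)
      have h₂ := hsupp (right_ne_zero_of_mul hGy)
      simp only [mem_range] at hy
      have hFG : F (i + j + 2 * k - y) = G y := by
        simp only [hF, hG]
        rw [mul_comm]
        congr 2 <;> omega
      exact ⟨i + j + 2 * k - y, by simp only [mem_range]; omega, hFG ▸ hGy, by omega⟩
    · intro x _ hFx
      have h₁ := hsupp (left_ne_zero_of_mul hFx)
      have h₂ := hsupp (right_ne_zero_of_mul hFx)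
      simp only [hF, hG]
      rw [mul_comm]
      congr 2 <;> omega
  rw [sum_range_add, sum_range_add, ← sum_range_reflect F, ← sum_range_reflect G] at hwin
  simp only [mul_apply, transpose_apply, toeplitz, of_apply]
  rw [Fin.sum_univ_eq_sum_range (fun x => a (i - x) * a (j - x)),
    Fin.sum_univ_eq_sum_range (fun x => a (x - i) * a (x - j))]
  convert hwin using 1 <;> rw [add_comm] <;> congr 1 <;> refine sum_congr rfl fun t ht => ?_ <;>
    simp only [mem_range] at ht <;> simp only [hF, hG] <;> congr 2 <;> omega

theorem mul_eq_mul_neg_of_toeplitz_normal [CommRing R]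
    (ha : Function.support a ⊆ Set.Icc (-k) k) (hn : 2 * k ≤ n)
    (hT : toeplitz n a * (toeplitz n a)ᵀ = (toeplitz n a)ᵀ * toeplitz n a) {u v : ℕ}
    (hu : 1 ≤ u) (hv : 1 ≤ v) : a u * a v = a (-u) * a (-v) := by
  have hsupp : ∀ {m}, a m ≠ 0 → -(k : ℤ) ≤ m ∧ m ≤ k := fun hm => ha hm
  obtain ⟨u, rfl⟩ := Nat.exists_eq_add_of_le' hu
  obtain ⟨v, rfl⟩ := Nat.exists_eq_add_of_le' hv
  push_cast
  rw [← sub_eq_zero]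
  refine eq_zero_of_sum_range_diag_eq_zero (k := k)
    (D := fun p q : ℕ => a (p + 1) * a (q + 1) - a (-(p + 1)) * a (-(q + 1))) ?_ ?_ u v
  · intro p q hpq
    have hzero : ∀ w : ℕ, k ≤ w → a (w + 1) = 0 ∧ a (-(w + 1)) = 0 := fun w hw =>
      ⟨by_contra fun h => by have := hsupp h; omega, by_contra fun h => by have := hsupp h; omega⟩
    rcases hpq with hp | hq
    · simp only [(hzero p hp).1, (hzero p hp).2, zero_mul, sub_zero]
    · simp only [(hzero q hq).1, (hzero q hq).2, mul_zero, sub_zero]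
  · intro p q hp hq
    have hcorner := toeplitz_mul_transpose_apply_add_sum ha (⟨p, by omega⟩ : Fin n) ⟨q, by omega⟩
      (by dsimp only; omega)
    rw [hT, add_right_inj] at hcorner
    rw [sum_sub_distrib, sub_eq_zero]
    push_cast
    simpa only [add_right_comm _ _ (1 : ℤ)] using hcorner

end Toeplitz

def bandedSymbol (k : ℕ) (σ τ : ℕ → ℝ) (δ : ℝ) (m : ℤ) : ℝ :=
  if m = 0 then δ else if k < m.natAbs then 0 else if 0 < m then σ m.natAbs else τ m.natAbs

section Banded

variable {n k : ℕ} {σ τ : ℕ → ℝ} {δ : ℝ}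

theorem bandedToeplitz_eq_toeplitz :
    bandedToeplitz n k σ τ δ = toeplitz n (bandedSymbol k σ τ δ) := by
  ext i j
  simp only [bandedToeplitz, toeplitz, bandedSymbol, of_apply]
  split_ifs <;> first | rfl | omega | (congr 1; omega)

theorem support_bandedSymbol_subset :
    Function.support (bandedSymbol k σ τ δ) ⊆ Set.Icc (-k) k := by
  intro m hm
  simp only [Function.mem_support, bandedSymbol] at hm
  rw [Set.mem_Icc]
  split_ifs at hm <;> first | omega | exact (hm rfl).elim

theorem bandedSymbol_natCast {m : ℕ} (hm : m ∈ Set.Icc 1 k) : bandedSymbol k σ τ δ m = σ m := by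
  obtain ⟨h1, hk⟩ := hm
  simp only [bandedSymbol, Int.natAbs_natCast]
  split_ifs <;> first | rfl | omega

theorem bandedSymbol_neg_natCast {m : ℕ} (hm : m ∈ Set.Icc 1 k) :
    bandedSymbol k σ τ δ (-m) = τ m := by
  obtain ⟨h1, hk⟩ := hm
  simp only [bandedSymbol, Int.natAbs_neg, Int.natAbs_natCast]
  split_ifs <;> first | rfl | omega

theorem bandedToeplitz_transpose_eq_self (h : Set.EqOn σ τ (Set.Icc 1 k)) :
    (bandedToeplitz n k σ τ δ)ᵀ = bandedToeplitz n k σ τ δ := by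
  ext i j
  simp only [transpose_apply, bandedToeplitz, of_apply]
  split_ifs <;>
    first | rfl | omega | exact h ⟨by omega, by omega⟩ | exact (h ⟨by omega, by omega⟩).symm

theorem bandedToeplitz_sub_smul_one_transpose (h : Set.EqOn σ (-τ) (Set.Icc 1 k)) :
    (bandedToeplitz n k σ τ δ - δ • (1 : Matrix (Fin n) (Fin n) ℝ))ᵀ =
      -(bandedToeplitz n k σ τ δ - δ • (1 : Matrix (Fin n) (Fin n) ℝ)) := by
  ext i j
  simp only [transpose_apply, Matrix.sub_apply, Matrix.neg_apply, Matrix.smul_apply, one_apply,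
    smul_eq_mul, bandedToeplitz, of_apply, ← Fin.val_eq_val]
  split_ifs <;> first | ring1 | omega | (rw [h ⟨by omega, by omega⟩, Pi.neg_apply]; ring1)

end Banded

/-- a (2k+1)-banded Toeplitz matrix of order n with k ≤ ⌊n/2⌋ is
normal iff it is symmetric or shifted skew-symmetric. -/
theorem banded_toeplitz_normal_iff {n k : ℕ} (hk : k ≤ n / 2)
    (σ τ : ℕ → ℝ) (δ : ℝ) :
    bandedToeplitz n k σ τ δ * (bandedToeplitz n k σ τ δ)ᵀ =
      (bandedToeplitz n k σ τ δ)ᵀ * bandedToeplitz n k σ τ δ ↔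
    ((bandedToeplitz n k σ τ δ)ᵀ = bandedToeplitz n k σ τ δ ∨
     (bandedToeplitz n k σ τ δ - δ • (1 : Matrix (Fin n) (Fin n) ℝ))ᵀ =
       -(bandedToeplitz n k σ τ δ - δ • (1 : Matrix (Fin n) (Fin n) ℝ))) := by
  constructor
  · intro hT
    rw [bandedToeplitz_eq_toeplitz] at hT
    have hprod : ∀ u ∈ Set.Icc 1 k, ∀ v ∈ Set.Icc 1 k, σ u * σ v = τ u * τ v := by
      intro u hu v hv
      simpa only [bandedSymbol_natCast hu, bandedSymbol_natCast hv, bandedSymbol_neg_natCast hu,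
        bandedSymbol_neg_natCast hv] using
        mul_eq_mul_neg_of_toeplitz_normal support_bandedSymbol_subset (by omega) hT hu.1 hv.1
    rcases eqOn_or_eqOn_neg_of_mul_eq_mul hprod with h | h
    · exact Or.inl (bandedToeplitz_transpose_eq_self h)
    · exact Or.inr (bandedToeplitz_sub_smul_one_transpose h)
  · rintro (h | h)
    · rw [h]
    · exact mul_transpose_eq_transpose_mul_of_sub_smul_one_skew h
end

section
/- For a real tridiagonal Toeplitz matrix T = (n;1;σ₁,δ,τ₁), the squared banded-Toeplitz-structured distance to normality equals ((n−1)/2)·(|σ₁| − |τ₁|)², i.e., ((n−1)/2)·min{(σ₁−τ₁)², (σ₁+τ₁)²}. -/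
open Matrix Real Finset

/-!
A tridiagonal Toeplitz matrix `(n;1;σ,δ,τ)` with `n ≥ 2` is normal exactly when `τ = ±σ`: the
`(0,0)` entries of `T Tᵀ` and `Tᵀ T` are `δ² + τ²` and `δ² + σ²`, and conversely `T` is then
symmetric or a shifted skew-symmetric matrix. Its squared Frobenius norm is
`n δ² + (n - 1)(σ² + τ²)`, so the distance to a normal `(n;1;s,e,±s)` is minimised by `e = δ` and
by taking `s` the mean of `σ` and `±τ`, which leaves `(n - 1)/2 · (σ ∓ τ)²`.
-/

lemma Matrix.commute_transpose_of_add_transpose_eq_smul_one {m R : Type*} [Fintype m]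
    [DecidableEq m] [CommRing R] {A : Matrix m m R} {c : R} (h : A + Aᵀ = c • 1) :
    Commute A Aᵀ := by
  rw [eq_sub_of_add_eq' h]
  exact ((Commute.one_right A).smul_right c).sub_right (Commute.refl A)

lemma Fin.sum_sum_ite_val_add_one_eq (n : ℕ) (c : ℝ) :
    ∑ i : Fin n, ∑ j : Fin n, (if (i : ℕ) + 1 = j then c else 0) = (n - 1 : ℕ) * c := by
  have row (i : Fin n) :
      ∑ j : Fin n, (if (i : ℕ) + 1 = j then c else 0) = if (i : ℕ) + 1 < n then c else 0 := by
    split_ifs with h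
    · rw [Finset.sum_eq_single ⟨i + 1, h⟩] <;> simp [Fin.ext_iff]; omega
    · exact Finset.sum_eq_zero fun j _ => if_neg (by omega)
  simp only [row]
  cases n with
  | zero => simp
  | succ n => simp [Fin.sum_univ_castSucc]

lemma triToeplitz_apply (n : ℕ) (a d b : ℝ) (i j : Fin n) :
    triToeplitz n a d b i j =
      if (i : ℕ) = j then d else if (j : ℕ) + 1 = i then a
      else if (i : ℕ) + 1 = j then b else 0 := by
  simp only [triToeplitz, bandedToeplitz, of_apply]
  split_ifs <;> first | rfl | omega

lemma triToeplitz_transpose (n : ℕ) (a d b : ℝ) :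
    (triToeplitz n a d b)ᵀ = triToeplitz n b d a := by
  ext i j
  simp only [transpose_apply, triToeplitz_apply]
  split_ifs <;> first | rfl | omega

lemma triToeplitz_sub (n : ℕ) (a d b a' d' b' : ℝ) :
    triToeplitz n a d b - triToeplitz n a' d' b' =
      triToeplitz n (a - a') (d - d') (b - b') := by
  ext i j
  simp only [Matrix.sub_apply, triToeplitz_apply]
  split_ifs <;> ring

lemma triToeplitz_add_transpose_of_skew (n : ℕ) (a d : ℝ) :
    triToeplitz n a d (-a) + (triToeplitz n a d (-a))ᵀ = (2 * d) • 1 := by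
  ext i j
  simp only [triToeplitz_transpose, Matrix.add_apply, Matrix.smul_apply, one_apply,
    triToeplitz_apply, Fin.ext_iff, smul_eq_mul]
  split_ifs <;> ring

lemma triToeplitz_normal_iff {n : ℕ} (hn : 2 ≤ n) (a d b : ℝ) :
    triToeplitz n a d b * (triToeplitz n a d b)ᵀ = (triToeplitz n a d b)ᵀ * triToeplitz n a d b ↔
      b = a ∨ b = -a := by
  constructor
  · intro h
    obtain ⟨m, rfl⟩ : ∃ m, n = m + 2 := ⟨n - 2, by omega⟩
    have corner := congrFun (congrFun h 0) 0
    exact sq_eq_sq_iff_eq_or_eq_neg.1 <| by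
      simpa [mul_apply, Fin.sum_univ_succ, triToeplitz_apply, sq] using corner
  · rintro (rfl | rfl)
    · rw [triToeplitz_transpose]
    · exact commute_transpose_of_add_transpose_eq_smul_one
        (triToeplitz_add_transpose_of_skew n a d)

lemma frobSq_triToeplitz (n : ℕ) (a d b : ℝ) :
    frobSq (triToeplitz n a d b) = n * d ^ 2 + (n - 1 : ℕ) * (a ^ 2 + b ^ 2) := by
  have entry_sq (i j : Fin n) : triToeplitz n a d b i j ^ 2 =
      (if (i : ℕ) = j then d ^ 2 else 0) + (if (j : ℕ) + 1 = i then a ^ 2 else 0) +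
        (if (i : ℕ) + 1 = j then b ^ 2 else 0) := by
    rw [triToeplitz_apply]
    split_ifs <;> first | omega | ring
  simp only [frobSq, entry_sq, Finset.sum_add_distrib, Fin.val_inj, Finset.sum_ite_eq,
    Finset.mem_univ, if_true]
  rw [Finset.sum_comm, Fin.sum_sum_ite_val_add_one_eq, Fin.sum_sum_ite_val_add_one_eq]
  simp only [sum_const, card_univ, Fintype.card_fin, nsmul_eq_mul]
  ring

lemma min_sq_le_two_mul_sq_add_sq (σ τ : ℝ) {s t : ℝ} (h : t = s ∨ t = -s) :
    min ((σ - τ) ^ 2) ((σ + τ) ^ 2) ≤ 2 * ((σ - s) ^ 2 + (τ - t) ^ 2) := by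
  rcases h with rfl | rfl
  · have := add_sq_le (a := σ - t) (b := t - τ)
    exact (min_le_left _ _).trans (by ring_nf at this ⊢; linarith)
  · have := add_sq_le (a := σ - s) (b := τ + s)
    exact (min_le_right _ _).trans (by ring_nf at this ⊢; linarith)

/-- the squared tridiagonal-Toeplitz-structured distance to normality
of `T = (n;1;σ₁,δ,τ₁)` is `((n−1)/2)·min{(σ₁−τ₁)², (σ₁+τ₁)²}`. -/
theorem tridiag_structured_distance_to_normality {n : ℕ} (hn : 2 ≤ n)
    (σ₁ δ τ₁ : ℝ) :
    sInf {d : ℝ | ∃ s t e : ℝ,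
        triToeplitz n s e t * (triToeplitz n s e t)ᵀ =
          (triToeplitz n s e t)ᵀ * triToeplitz n s e t ∧
        d = frobSq (triToeplitz n σ₁ δ τ₁ - triToeplitz n s e t)} =
      (((n : ℝ) - 1)/2) * min ((σ₁ - τ₁)^2) ((σ₁ + τ₁)^2) := by
  have hn₁ : ((n - 1 : ℕ) : ℝ) = n - 1 := by rw [Nat.cast_sub (by omega), Nat.cast_one]
  refine IsLeast.csInf_eq ⟨?_, ?_⟩
  · rcases le_total ((σ₁ - τ₁) ^ 2) ((σ₁ + τ₁) ^ 2) with h | h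
    · refine ⟨(σ₁ + τ₁) / 2, (σ₁ + τ₁) / 2, δ, (triToeplitz_normal_iff hn ..).2 (.inl rfl), ?_⟩
      rw [triToeplitz_sub, frobSq_triToeplitz, min_eq_left h, hn₁]
      ring
    · refine ⟨(σ₁ - τ₁) / 2, -((σ₁ - τ₁) / 2), δ, (triToeplitz_normal_iff hn ..).2 (.inr rfl), ?_⟩
      rw [triToeplitz_sub, frobSq_triToeplitz, min_eq_right h, hn₁]
      ring
  · rintro d ⟨s, t, e, hnormal, rfl⟩
    have hmin := min_sq_le_two_mul_sq_add_sq σ₁ τ₁ ((triToeplitz_normal_iff hn s e t).1 hnormal)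
    have hn₂ : (2 : ℝ) ≤ n := by exact_mod_cast hn
    rw [triToeplitz_sub, frobSq_triToeplitz, hn₁]
    nlinarith [mul_le_mul_of_nonneg_left hmin (by linarith : (0 : ℝ) ≤ (n - 1) / 2),
      mul_nonneg (by linarith : (0 : ℝ) ≤ n) (sq_nonneg (δ - e))]
end

section
/- Let A, B ∈ ℝ^{n×n} be symmetric with eigenvalues λ_1(A) ≥ ... ≥ λ_n(A) and λ_1(B) ≥ ... ≥ λ_n(B). Then ‖A − B‖_F ≥ sqrt(Σ_{i=1}^{n} (λ_i(A) − λ_i(B))²) (Hoffman–Wielandt type inequality with ordered eigenvalues). -/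
open Matrix Real Finset

/-! Write `A = U diag(μ) Uᵀ` and `B = V diag(ν) Vᵀ` with `U`, `V` orthogonal. Then
`‖A - B‖_F² = ‖μ‖² + ‖ν‖² - 2 tr(AB)` and `tr(AB) = μᵀ S ν`, where `S = W ⊙ W` is the entrywise
square of the orthogonal matrix `W = UᵀV`, hence doubly stochastic. By Birkhoff's theorem `S` is
a convex combination of permutation matrices, and by the rearrangement inequality each of these
gives at most `μ ⬝ ν`, because `μ` and `ν` are sorted the same way. -/

namespace Matrix

variable {ι : Type*} [Fintype ι] [DecidableEq ι]

theorem vecMul_dotProduct_le_of_mem_doublyStochastic {R : Type*} [Field R] [LinearOrder R]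
    [IsStrictOrderedRing R] {S : Matrix ι ι R} (hS : S ∈ doublyStochastic R ι) {a b : ι → R}
    (hab : Monovary a b) : a ᵥ* S ⬝ᵥ b ≤ a ⬝ᵥ b := by
  have hlin : IsLinearMap R fun M : Matrix ι ι R => a ᵥ* M ⬝ᵥ b :=
    ⟨fun M N => by simp [vecMul_add, add_dotProduct],
      fun c M => by simp [vecMul_smul, smul_dotProduct]⟩
  rw [← SetLike.mem_coe, doublyStochastic_eq_convexHull_permMatrix] at hS
  refine convexHull_min ?_ (convex_halfSpace_le hlin _) hS
  rintro _ ⟨σ, rfl⟩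
  simpa [vecMul_permMatrix, dotProduct] using hab.sum_comp_perm_mul_le_sum_mul (σ := σ.symm)

theorem hadamard_self_mem_doublyStochastic {W : Matrix ι ι ℝ} (hW : W ∈ orthogonalGroup ι ℝ) :
    W ⊙ W ∈ doublyStochastic ℝ ι := by
  have hrow := congrFun₂ ((mem_orthogonalGroup_iff ι ℝ).mp hW)
  have hcol := congrFun₂ ((mem_orthogonalGroup_iff' ι ℝ).mp hW)
  refine mem_doublyStochastic_iff_sum.mpr ⟨fun i j => mul_self_nonneg _, fun i => ?_, fun j => ?_⟩
  · simpa [mul_apply] using hrow i i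
  · simpa [mul_apply] using hcol j j

theorem trace_conj_diagonal_mul_conj_diagonal (U V : Matrix ι ι ℝ) (a b : ι → ℝ) :
    trace (U * diagonal a * Uᵀ * (V * diagonal b * Vᵀ)) =
      a ᵥ* ((Uᵀ * V) ⊙ (Uᵀ * V)) ⬝ᵥ b := by
  rw [dotProduct_vecMul_hadamard, transpose_mul, transpose_mul, transpose_transpose,
    diagonal_transpose]
  simp only [Matrix.mul_assoc]
  rw [trace_mul_comm U]
  simp only [Matrix.mul_assoc]

theorem trace_conj_diagonal_mul_conj_diagonal_le {U V : Matrix ι ι ℝ}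
    (hU : U ∈ orthogonalGroup ι ℝ) (hV : V ∈ orthogonalGroup ι ℝ) {a b : ι → ℝ}
    (hab : Monovary a b) :
    trace (U * diagonal a * Uᵀ * (V * diagonal b * Vᵀ)) ≤ a ⬝ᵥ b := by
  rw [trace_conj_diagonal_mul_conj_diagonal]
  exact vecMul_dotProduct_le_of_mem_doublyStochastic
    (hadamard_self_mem_doublyStochastic (mul_mem (transpose_mem_unitaryGroup_iff.mpr hU) hV)) hab

theorem trace_conj_diagonal_mul_self {U : Matrix ι ι ℝ} (hU : U ∈ orthogonalGroup ι ℝ)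
    (a : ι → ℝ) : trace (U * diagonal a * Uᵀ * (U * diagonal a * Uᵀ)) = a ⬝ᵥ a := by
  rw [trace_conj_diagonal_mul_conj_diagonal, (mem_orthogonalGroup_iff' ι ℝ).mp hU, hadamard_one]
  simp

theorem sum_sq_sub_le_trace_mul_transpose {U V : Matrix ι ι ℝ}
    (hU : U ∈ orthogonalGroup ι ℝ) (hV : V ∈ orthogonalGroup ι ℝ) {a b : ι → ℝ}
    (hab : Monovary a b) :
    ∑ i, (a i - b i) ^ 2 ≤
      trace ((U * diagonal a * Uᵀ - V * diagonal b * Vᵀ) *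
        (U * diagonal a * Uᵀ - V * diagonal b * Vᵀ)ᵀ) := by
  set X := U * diagonal a * Uᵀ
  set Y := V * diagonal b * Vᵀ
  have hXY : trace (X * Y) ≤ a ⬝ᵥ b := trace_conj_diagonal_mul_conj_diagonal_le hU hV hab
  have hXX : trace (X * X) = a ⬝ᵥ a := trace_conj_diagonal_mul_self hU a
  have hYY : trace (Y * Y) = b ⬝ᵥ b := trace_conj_diagonal_mul_self hV b
  have hXt : Xᵀ = X := by simp [X, Matrix.mul_assoc]
  have hYt : Yᵀ = Y := by simp [Y, Matrix.mul_assoc]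
  have hsq : ∑ i, (a i - b i) ^ 2 = a ⬝ᵥ a - 2 * (a ⬝ᵥ b) + b ⬝ᵥ b := by
    simp only [dotProduct, Finset.mul_sum, ← Finset.sum_sub_distrib, ← Finset.sum_add_distrib]
    exact Finset.sum_congr rfl fun i _ => by ring
  rw [transpose_sub, hXt, hYt, sub_mul, mul_sub, mul_sub, trace_sub, trace_sub, trace_sub,
    trace_mul_comm Y X, hsq]
  linarith

theorem IsHermitian.exists_orthogonal_eq_conj_diagonal_comp {A : Matrix ι ι ℝ}
    (hA : A.IsHermitian) (e : Equiv.Perm ι) :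
    ∃ U ∈ orthogonalGroup ι ℝ, A = U * diagonal (hA.eigenvalues ∘ e) * Uᵀ := by
  have hA' : A = (hA.eigenvectorUnitary : Matrix ι ι ℝ) * diagonal hA.eigenvalues *
      (hA.eigenvectorUnitary : Matrix ι ι ℝ)ᵀ := by
    simpa [star_eq_conjTranspose] using hA.spectral_theorem
  have hU := hA.eigenvectorUnitary.2
  generalize (hA.eigenvectorUnitary : Matrix ι ι ℝ) = U at hA' hU
  refine ⟨U.submatrix id e, ?_, ?_⟩
  · rw [mem_orthogonalGroup_iff, transpose_submatrix, submatrix_mul_equiv]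
    simpa using (mem_orthogonalGroup_iff ι ℝ).mp hU
  · rw [transpose_submatrix, ← submatrix_diagonal_equiv, submatrix_mul_equiv, submatrix_mul_equiv]
    simpa using hA'

end Matrix

theorem frobSq_eq_trace_mul_transpose {n : ℕ} (M : Matrix (Fin n) (Fin n) ℝ) :
    frobSq M = trace (M * Mᵀ) := by
  simp [frobSq, trace, mul_apply, sq]

/-- Hoffman–Wielandt-type inequality: for symmetric `A`, `B` with
eigenvalues listed in nonincreasing order, `‖A − B‖_F ≥ sqrt(Σ (λ_i(A) − λ_i(B))²)`. -/
theorem hoffman_wielandt_ordered {n : ℕ} (A B : Matrix (Fin n) (Fin n) ℝ)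
    (hA : A.IsHermitian) (hB : B.IsHermitian) (μ ν : Fin n → ℝ)
    (eA eB : Equiv.Perm (Fin n))
    (hμ : μ = hA.eigenvalues ∘ eA) (hν : ν = hB.eigenvalues ∘ eB)
    (hμa : Antitone μ) (hνa : Antitone ν) :
    Real.sqrt (frobSq (A - B)) ≥ Real.sqrt (∑ i, (μ i - ν i)^2) := by
  obtain ⟨U, hU, hAU⟩ := hA.exists_orthogonal_eq_conj_diagonal_comp eA
  obtain ⟨V, hV, hBV⟩ := hB.exists_orthogonal_eq_conj_diagonal_comp eB
  rw [← hμ] at hAU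
  rw [← hν] at hBV
  rw [frobSq_eq_trace_mul_transpose, hAU, hBV]
  exact Real.sqrt_le_sqrt (sum_sq_sub_le_trace_mul_transpose hU hV (hμa.monovary hνa))
end

section
/- Let T = (n;k;σ,δ,τ) with δ > 0. Then the squared (2k+1)-banded Toeplitz structured Frobenius distance from T to the set of symmetric positive semidefinite (2k+1)-banded Toeplitz matrices is at most min{ Σ_{i=1}^{k} (n−i)(σ_i² + τ_i²), n·max{0, Σ_{i=1}^{k}|σ_i+τ_i| − δ}² + Σ_{i=1}^{k} ((n−i)/2)(σ_i−τ_i)² }. -/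
open Matrix Real Finset

/-!
Both bounds come from explicit competitors: `δ • 1`, and the symmetric banded Toeplitz
matrix with off-diagonals `(σᵢ + τᵢ) / 2` and diagonal `max δ (∑ᵢ |σᵢ + τᵢ|)`. The latter is
positive semidefinite because its diagonal dominates its rows, so by Gershgorin's theorem no
eigenvalue is negative.
The squared Frobenius norm of a banded Toeplitz matrix is evaluated by counting the `n - d`
entries on the `d`-th sub- and superdiagonal.
-/

open scoped ComplexOrder in
theorem Matrix.IsHermitian.posSemidef_of_sum_norm_le_re_diag {𝕜 ι : Type*} [RCLike 𝕜]
    [Fintype ι] [DecidableEq ι] {A : Matrix ι ι 𝕜} (hA : A.IsHermitian)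
    (hdom : ∀ i, ∑ j ∈ univ.erase i, ‖A i j‖ ≤ RCLike.re (A i i)) : A.PosSemidef := by
  refine hA.posSemidef_iff_eigenvalues_nonneg.2 fun i => ?_
  have hμ : Module.End.HasEigenvalue (toLin' A) (hA.eigenvalues i : 𝕜) := by
    refine Module.End.hasEigenvalue_iff_mem_spectrum.2 ?_
    rw [spectrum_toLin']
    exact spectrum.algebraMap_mem 𝕜 (hA.eigenvalues_mem_spectrum_real i)
  obtain ⟨k, hk⟩ := eigenvalue_mem_ball hμ
  rw [Metric.mem_closedBall, dist_eq_norm] at hk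
  have hre : |hA.eigenvalues i - RCLike.re (A k k)| ≤ ‖(hA.eigenvalues i : 𝕜) - A k k‖ := by
    simpa using RCLike.abs_re_le_norm ((hA.eigenvalues i : 𝕜) - A k k)
  show (0 : ℝ) ≤ _
  linarith [(abs_le.1 (hre.trans (hk.trans (hdom k)))).1]

section Sums

variable {M : Type*} [AddCommMonoid M]

theorem Finset.sum_range_sub_eq_sum_Icc (F : ℕ → M) (m : ℕ) :
    ∑ j ∈ range m, F (m - j) = ∑ d ∈ Icc 1 m, F d := by
  refine sum_nbij' (m - ·) (m - ·) ?_ ?_ ?_ ?_ fun _ _ => rfl <;>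
    intro a ha <;> simp only [mem_range, mem_Icc] at ha ⊢ <;> omega

theorem Fin.sum_ite_lt_sub (F : ℕ → M) {n : ℕ} (i : Fin n) :
    ∑ j : Fin n, (if (j : ℕ) < i then F (i - j) else 0) = ∑ d ∈ Icc 1 (i : ℕ), F d := by
  have hfilter : (range n).filter (· < (i : ℕ)) = range i := by
    ext j; simp only [mem_filter, mem_range]; omega
  rw [Fin.sum_univ_eq_sum_range (fun j => if j < (i : ℕ) then F (i - j) else 0), ← sum_filter,
    hfilter, sum_range_sub_eq_sum_Icc]

theorem Fin.sum_ite_gt_sub (F : ℕ → M) {n : ℕ} (i : Fin n) :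
    ∑ j : Fin n, (if (i : ℕ) < j then F (j - i) else 0) = ∑ d ∈ Icc 1 (n - 1 - i), F d := by
  have hrev := Fin.sum_ite_lt_sub F i.rev
  rw [Fin.val_rev, show n - (i + 1) = n - 1 - i by omega] at hrev
  rw [← hrev]
  refine Fintype.sum_equiv Fin.revPerm _ _ fun j => ?_
  simp only [Fin.revPerm_apply, Fin.val_rev]
  by_cases h : (i : ℕ) < j
  · rw [if_pos h, if_pos (by omega)]
    congr 1
    omega
  · rw [if_neg h, if_neg (by omega)]

end Sums

theorem Fin.sum_sum_ite_lt_sub {R : Type*} [CommRing R] (F : ℕ → R) (n : ℕ) :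
    ∑ i : Fin n, ∑ j : Fin n, (if (j : ℕ) < i then F (i - j) else 0)
      = ∑ d ∈ Icc 1 n, ((n : R) - d) * F d := by
  simp_rw [Fin.sum_ite_lt_sub]
  rw [Fin.sum_univ_eq_sum_range (fun i => ∑ d ∈ Icc 1 i, F d)]
  induction n with
  | zero => simp
  | succ n ih =>
    rw [sum_range_succ, ih, sum_Icc_succ_top (by omega), Nat.cast_succ, sub_self, zero_mul,
      add_zero, ← sum_add_distrib]
    exact sum_congr rfl fun d _ => by ring

theorem Fin.sum_sum_ite_gt_sub {R : Type*} [CommRing R] (F : ℕ → R) (n : ℕ) :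
    ∑ i : Fin n, ∑ j : Fin n, (if (i : ℕ) < j then F (j - i) else 0)
      = ∑ d ∈ Icc 1 n, ((n : R) - d) * F d := by
  rw [sum_comm]
  exact Fin.sum_sum_ite_lt_sub F n

theorem Finset.sum_Icc_mul_indicator_Iic {R : Type*} [NonUnitalNonAssocSemiring R] {k m : ℕ}
    (hk : k ≤ m) (w f : ℕ → R) :
    ∑ d ∈ Icc 1 m, w d * (Set.Iic k).indicator f d = ∑ d ∈ Icc 1 k, w d * f d := by
  rw [← sum_subset (Icc_subset_Icc_right hk) fun d hd hd' => ?_]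
  · exact sum_congr rfl fun d hd => by
      rw [Set.indicator_of_mem (by simp only [mem_Icc] at hd; exact hd.2)]
  · simp only [mem_Icc, not_and, not_le] at hd hd'
    rw [Set.indicator_of_notMem (by simpa using hd' hd.1), mul_zero]

theorem Finset.sum_Icc_abs_indicator_Iic_le (m k : ℕ) (f : ℕ → ℝ) :
    ∑ d ∈ Icc 1 m, |(Set.Iic k).indicator f d| ≤ ∑ d ∈ Icc 1 k, |f d| := by
  calc ∑ d ∈ Icc 1 m, |(Set.Iic k).indicator f d|
      = ∑ d ∈ (Icc 1 m).filter (· ≤ k), |f d| := by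
        rw [sum_filter]
        exact sum_congr rfl fun d _ => by by_cases h : d ≤ k <;> simp [h]
    _ ≤ ∑ d ∈ Icc 1 k, |f d| :=
        sum_le_sum_of_subset_of_nonneg
          (fun d hd => by simp only [mem_filter, mem_Icc] at hd ⊢; omega) fun _ _ _ => abs_nonneg _

namespace bandedToeplitz

variable (n k : ℕ)

theorem sub (f g f' g' : ℕ → ℝ) (c c' : ℝ) :
    bandedToeplitz n k f g c - bandedToeplitz n k f' g' c' =
      bandedToeplitz n k (f - f') (g - g') (c - c') := by
  ext i j
  simp only [Matrix.sub_apply, bandedToeplitz, Matrix.of_apply, Pi.sub_apply]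
  split_ifs <;> ring

theorem apply_sq (f g : ℕ → ℝ) (c : ℝ) (i j : Fin n) :
    bandedToeplitz n k f g c i j ^ 2 = bandedToeplitz n k (f ^ 2) (g ^ 2) (c ^ 2) i j := by
  simp only [bandedToeplitz, Matrix.of_apply, Pi.pow_apply]
  split_ifs <;> ring

theorem apply_eq_diag_add_lower_add_upper (f g : ℕ → ℝ) (c : ℝ) (i j : Fin n) :
    bandedToeplitz n k f g c i j =
      (if i = j then c else 0) + (if (j : ℕ) < i then (Set.Iic k).indicator f (i - j) else 0)
        + (if (i : ℕ) < j then (Set.Iic k).indicator g (j - i) else 0) := by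
  simp only [bandedToeplitz, Matrix.of_apply, Set.indicator_apply, Set.mem_Iic, ← Fin.val_inj]
  split_ifs <;> first | (exfalso; omega) | ring1

theorem sum_sum_apply {n k : ℕ} (hk : k ≤ n) (f g : ℕ → ℝ) (c : ℝ) :
    ∑ i, ∑ j, bandedToeplitz n k f g c i j
      = n * c + ∑ d ∈ Icc 1 k, ((n : ℝ) - d) * (f d + g d) := by
  simp_rw [apply_eq_diag_add_lower_add_upper, sum_add_distrib]
  rw [Fin.sum_sum_ite_lt_sub, Fin.sum_sum_ite_gt_sub, sum_Icc_mul_indicator_Iic hk,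
    sum_Icc_mul_indicator_Iic hk, add_assoc, ← sum_add_distrib]
  simp [mul_add]

theorem frobSq_eq {n k : ℕ} (hk : k ≤ n) (f g : ℕ → ℝ) (c : ℝ) :
    frobSq (bandedToeplitz n k f g c)
      = n * c ^ 2 + ∑ d ∈ Icc 1 k, ((n : ℝ) - d) * (f d ^ 2 + g d ^ 2) := by
  simp only [frobSq, apply_sq, sum_sum_apply hk, Pi.pow_apply]

theorem sum_erase_abs_apply_le (f g : ℕ → ℝ) (c : ℝ) (i : Fin n) :
    ∑ j ∈ univ.erase i, |bandedToeplitz n k f g c i j| ≤ ∑ d ∈ Icc 1 k, (|f d| + |g d|) := by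
  calc ∑ j ∈ univ.erase i, |bandedToeplitz n k f g c i j|
      ≤ ∑ j ∈ univ.erase i,
          (|if (j : ℕ) < i then (Set.Iic k).indicator f (i - j) else 0|
            + |if (i : ℕ) < j then (Set.Iic k).indicator g (j - i) else 0|) :=
        sum_le_sum fun j hj => by
          rw [apply_eq_diag_add_lower_add_upper, if_neg (ne_of_mem_erase hj).symm, zero_add]
          exact abs_add_le _ _
    _ = ∑ j : Fin n,
          (|if (j : ℕ) < i then (Set.Iic k).indicator f (i - j) else 0|
            + |if (i : ℕ) < j then (Set.Iic k).indicator g (j - i) else 0|) :=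
        sum_erase _ (by simp)
    _ = ∑ d ∈ Icc 1 (i : ℕ), |(Set.Iic k).indicator f d|
          + ∑ d ∈ Icc 1 (n - 1 - i), |(Set.Iic k).indicator g d| := by
        simp only [apply_ite (fun x : ℝ => |x|), abs_zero, sum_add_distrib]
        rw [Fin.sum_ite_lt_sub (fun d => |(Set.Iic k).indicator f d|),
          Fin.sum_ite_gt_sub (fun d => |(Set.Iic k).indicator g d|)]
    _ ≤ ∑ d ∈ Icc 1 k, (|f d| + |g d|) := by
        rw [sum_add_distrib]
        exact add_le_add (sum_Icc_abs_indicator_Iic_le _ _ _) (sum_Icc_abs_indicator_Iic_le _ _ _)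

theorem isHermitian (s : ℕ → ℝ) (c : ℝ) : (bandedToeplitz n k s s c).IsHermitian := by
  ext i j
  simp only [conjTranspose_apply, star_trivial, bandedToeplitz, Matrix.of_apply]
  split_ifs <;> first | rfl | omega

theorem posSemidef_of_sum_le (s : ℕ → ℝ) {c : ℝ} (hc : ∑ d ∈ Icc 1 k, 2 * |s d| ≤ c) :
    (bandedToeplitz n k s s c).PosSemidef :=
  (isHermitian n k s c).posSemidef_of_sum_norm_le_re_diag fun i => by
    have hdiag : bandedToeplitz n k s s c i i = c := by simp [bandedToeplitz]
    simp only [Real.norm_eq_abs, RCLike.re_to_real, hdiag]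
    exact (sum_erase_abs_apply_le n k s s c i).trans (by simpa only [two_mul] using hc)

end bandedToeplitz

/-- for `δ > 0`, an upper bound on the squared banded-Toeplitz
structured Frobenius distance from `T = (n;k;σ,δ,τ)` to the symmetric positive
semidefinite (2k+1)-banded Toeplitz matrices. -/
theorem structured_dist_upper_bound_pos_delta {n k : ℕ} (hk : k ≤ n)
    (σ τ : ℕ → ℝ) (δ : ℝ) (hδ : 0 < δ) :
    sInf {d : ℝ | ∃ s t : ℕ → ℝ, ∃ dd : ℝ,
        (bandedToeplitz n k s t dd).PosSemidef ∧
        d = frobSq (bandedToeplitz n k σ τ δ - bandedToeplitz n k s t dd)} ≤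
      min (∑ i ∈ Finset.Icc 1 k, ((n : ℝ) - i) * ((σ i)^2 + (τ i)^2))
        ((n : ℝ) * (max 0 ((∑ i ∈ Finset.Icc 1 k, |σ i + τ i|) - δ))^2 +
          ∑ i ∈ Finset.Icc 1 k, (((n : ℝ) - i)/2) * (σ i - τ i)^2) := by
  set γ := max 0 ((∑ i ∈ Finset.Icc 1 k, |σ i + τ i|) - δ)
  let μ : ℕ → ℝ := fun i => (σ i + τ i) / 2
  have hμ : ∑ i ∈ Icc 1 k, 2 * |μ i| ≤ δ + γ := by
    simp only [μ, abs_div, abs_two, mul_div_cancel₀ _ (two_ne_zero (α := ℝ))]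
    linarith [le_max_right 0 ((∑ i ∈ Finset.Icc 1 k, |σ i + τ i|) - δ)]
  refine le_min (csInf_le ?bdd ⟨0, 0, δ, bandedToeplitz.posSemidef_of_sum_le n k 0 ?_, ?_⟩)
    (csInf_le ?bdd ⟨μ, μ, δ + γ, bandedToeplitz.posSemidef_of_sum_le n k μ hμ, ?_⟩)
  case bdd =>
    refine ⟨0, ?_⟩
    rintro _ ⟨s, t, dd, -, rfl⟩
    exact sum_nonneg fun _ _ => sum_nonneg fun _ _ => sq_nonneg _
  · simpa using hδ.le
  · simp [bandedToeplitz.sub, bandedToeplitz.frobSq_eq hk]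
  · rw [bandedToeplitz.sub, bandedToeplitz.frobSq_eq hk]
    congr 1
    · ring
    · exact sum_congr rfl fun i _ => by simp only [μ, Pi.sub_apply]; ring
end

section
/- Let T = (n;k;σ,δ,τ) with δ ≤ 0. Then the squared (2k+1)-banded Toeplitz structured Frobenius distance from T to the set of symmetric positive semidefinite (2k+1)-banded Toeplitz matrices is at most min{ Σ_{i=1}^{k} (n−i)(σ_i² + τ_i²) + nδ², n·(Σ_{i=1}^{k}|σ_i+τ_i| − δ)² + Σ_{i=1}^{k} ((n−i)/2)(σ_i−τ_i)² }. -/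
open Matrix Real Finset

/-! Both bounds are squared distances to explicit competitors: `S = 0`, and the symmetric part
of `T` with its diagonal raised to `∑ |σ i + τ i|`. The latter is positive semidefinite by
Gershgorin's theorem, since each of its rows has off-diagonal absolute sum at most
`∑ |σ i + τ i|`. The squared Frobenius norm of a banded Toeplitz matrix is read off by counting
entries: its `d`-th sub- and superdiagonals have `n - d` entries each. -/

lemma sum_Icc_ite_add_eq {M : Type*} [AddCommMonoid M] (k a b : ℕ) (f : ℕ → M) :
    ∑ d ∈ Icc 1 k, (if a + d = b then f d else 0) =
      if a < b ∧ b - a ≤ k then f (b - a) else 0 := by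
  have key : ∀ d, (a + d = b) ↔ (b - a = d ∧ a ≤ b) := fun d => by omega
  simp_rw [key, ite_and, sum_ite_eq, mem_Icc]
  split_ifs <;> first | rfl | omega

lemma sum_sum_ite_add_eq {n d : ℕ} (hd : d ≤ n) (c : ℝ) :
    ∑ i : Fin n, ∑ j : Fin n, (if (j : ℕ) + d = i then c else 0) = (n - d) * c := by
  rw [sum_comm]
  have hcol : ∀ j : Fin n, ∑ i : Fin n, (if (j : ℕ) + d = i then c else 0) =
      if (j : ℕ) + d < n then c else 0 := by
    intro j
    rw [Fin.sum_univ_eq_sum_range (fun i => if j + d = i then c else 0), sum_ite_eq]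
    simp only [mem_range]
  simp_rw [hcol]
  rw [Fin.sum_univ_eq_sum_range (fun j => if j + d < n then c else 0), ← sum_filter, sum_const]
  have hfilter : (range n).filter (· + d < n) = range (n - d) := by
    ext j
    simp only [mem_filter, mem_range]
    omega
  rw [hfilter, card_range, nsmul_eq_mul, Nat.cast_sub hd]

lemma sum_ite_comp_eq_le {ι β : Type*} [Fintype ι] [DecidableEq β] {g : ι → β}
    (hg : Function.Injective g) (b : β) {c : ℝ} (hc : 0 ≤ c) :
    ∑ j, (if g j = b then c else 0) ≤ c := by
  rw [← sum_filter, sum_const, nsmul_eq_mul]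
  have hcard : #(univ.filter (g · = b)) ≤ 1 :=
    card_le_one.mpr fun a ha a' ha' => hg (by simp_all)
  exact mul_le_of_le_one_left hc (by exact_mod_cast hcard)

lemma bandedToeplitz_apply_eq_sum (n k : ℕ) (σ τ : ℕ → ℝ) (δ : ℝ) (i j : Fin n) :
    bandedToeplitz n k σ τ δ i j = (if (i : ℕ) = j then δ else 0) +
      ∑ d ∈ Icc 1 k, ((if (j : ℕ) + d = i then σ d else 0) +
        (if (i : ℕ) + d = j then τ d else 0)) := by
  rw [sum_add_distrib, sum_Icc_ite_add_eq, sum_Icc_ite_add_eq]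
  simp only [bandedToeplitz, of_apply]
  split_ifs <;> first | omega | simp

lemma bandedToeplitz_map (n k : ℕ) (σ τ : ℕ → ℝ) (δ : ℝ) {f : ℝ → ℝ} (hf : f 0 = 0) :
    (bandedToeplitz n k σ τ δ).map f = bandedToeplitz n k (f ∘ σ) (f ∘ τ) (f δ) := by
  ext i j
  simp only [bandedToeplitz, map_apply, of_apply, Function.comp_apply]
  split_ifs <;> first | rfl | exact hf

lemma bandedToeplitz_sub (n k : ℕ) (σ τ s t : ℕ → ℝ) (δ d : ℝ) :
    bandedToeplitz n k σ τ δ - bandedToeplitz n k s t d =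
      bandedToeplitz n k (σ - s) (τ - t) (δ - d) := by
  ext i j
  simp only [Matrix.sub_apply, bandedToeplitz, of_apply, Pi.sub_apply]
  split_ifs <;> ring

lemma bandedToeplitz_zero (n k : ℕ) : bandedToeplitz n k 0 0 0 = 0 := by
  ext i j
  simp only [bandedToeplitz, of_apply, Matrix.zero_apply, Pi.zero_apply]
  split_ifs <;> rfl

lemma isHermitian_bandedToeplitz (n k : ℕ) (s : ℕ → ℝ) (d : ℝ) :
    (bandedToeplitz n k s s d).IsHermitian := by
  ext i j
  simp only [conjTranspose_apply, bandedToeplitz, of_apply, star_trivial]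
  split_ifs <;> first | rfl | omega

lemma sum_sum_bandedToeplitz {n k : ℕ} (hk : k ≤ n) (σ τ : ℕ → ℝ) (δ : ℝ) :
    ∑ i, ∑ j, bandedToeplitz n k σ τ δ i j =
      n * δ + ∑ d ∈ Icc 1 k, ((n : ℝ) - d) * (σ d + τ d) := by
  have hdiag : ∑ i : Fin n, ∑ j : Fin n, (if (i : ℕ) = j then δ else 0) = n * δ := by
    simp [Fin.val_inj]
  have hband : ∀ d ∈ Icc 1 k, ∑ i : Fin n, ∑ j : Fin n,
      ((if (j : ℕ) + d = i then σ d else 0) + (if (i : ℕ) + d = j then τ d else 0)) =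
        ((n : ℝ) - d) * (σ d + τ d) := by
    intro d hd
    have hdn : d ≤ n := (mem_Icc.mp hd).2.trans hk
    simp_rw [sum_add_distrib]
    rw [sum_comm (f := fun i j : Fin n => if (i : ℕ) + d = j then τ d else 0),
      sum_sum_ite_add_eq hdn, sum_sum_ite_add_eq hdn, mul_add]
  simp_rw [bandedToeplitz_apply_eq_sum]
  rw [sum_congr rfl fun i _ => sum_add_distrib, sum_add_distrib, hdiag, ← sum_congr rfl hband,
    sum_congr rfl fun i _ => sum_comm, sum_comm]

lemma sum_bandedToeplitz_le {n k : ℕ} (σ τ : ℕ → ℝ) (δ : ℝ) (hσ : 0 ≤ σ) (hτ : 0 ≤ τ)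
    (i : Fin n) : ∑ j, bandedToeplitz n k σ τ δ i j ≤ δ + ∑ d ∈ Icc 1 k, (σ d + τ d) := by
  have hdiag : ∑ j : Fin n, (if (i : ℕ) = j then δ else 0) = δ := by simp [Fin.val_inj]
  have hband : ∀ d ∈ Icc 1 k, ∑ j : Fin n,
      ((if (j : ℕ) + d = i then σ d else 0) + (if (i : ℕ) + d = j then τ d else 0)) ≤
        σ d + τ d := by
    intro d _
    have hinj : Function.Injective fun j : Fin n => (j : ℕ) + d :=
      fun _ _ h => Fin.ext (Nat.add_right_cancel h)
    simp_rw [sum_add_distrib, @eq_comm _ ((i : ℕ) + d)]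
    exact add_le_add (sum_ite_comp_eq_le hinj _ (hσ d))
      (sum_ite_comp_eq_le Fin.val_injective _ (hτ d))
  simp_rw [bandedToeplitz_apply_eq_sum]
  rw [sum_add_distrib, hdiag, sum_comm]
  exact add_le_add_right (sum_le_sum hband) δ

lemma frobSq_bandedToeplitz {n k : ℕ} (hk : k ≤ n) (σ τ : ℕ → ℝ) (δ : ℝ) :
    frobSq (bandedToeplitz n k σ τ δ) =
      n * δ ^ 2 + ∑ d ∈ Icc 1 k, ((n : ℝ) - d) * (σ d ^ 2 + τ d ^ 2) := by
  change ∑ i, ∑ j, (bandedToeplitz n k σ τ δ).map (· ^ 2) i j = _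
  rw [bandedToeplitz_map n k σ τ δ (f := (· ^ 2)) (zero_pow two_ne_zero),
    sum_sum_bandedToeplitz hk]
  rfl

lemma frobSq_nonneg {n : ℕ} (A : Matrix (Fin n) (Fin n) ℝ) : 0 ≤ frobSq A :=
  sum_nonneg fun _ _ => sum_nonneg fun _ _ => sq_nonneg _

lemma posSemidef_of_sum_abs_le_diag {ι : Type*} [Fintype ι] [DecidableEq ι]
    {A : Matrix ι ι ℝ} (hA : A.IsHermitian)
    (hdom : ∀ i, ∑ j ∈ univ.erase i, |A i j| ≤ A i i) : A.PosSemidef := by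
  rw [hA.posSemidef_iff_eigenvalues_nonneg]
  intro i
  rw [Pi.zero_apply]
  have hev : Module.End.HasEigenvalue (toLin' A) (hA.eigenvalues i) := by
    rw [Module.End.hasEigenvalue_iff_mem_spectrum, spectrum_toLin']
    exact hA.eigenvalues_mem_spectrum_real i
  obtain ⟨r, hr⟩ := eigenvalue_mem_ball hev
  simp_rw [Metric.mem_closedBall, Real.dist_eq, Real.norm_eq_abs] at hr
  linarith [neg_abs_le (hA.eigenvalues i - A r r), hdom r]

lemma posSemidef_bandedToeplitz (n k : ℕ) (s : ℕ → ℝ) (δ : ℝ)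
    (hδ : ∑ m ∈ Icc 1 k, 2 * |s m| ≤ δ) : (bandedToeplitz n k s s δ).PosSemidef := by
  refine posSemidef_of_sum_abs_le_diag (isHermitian_bandedToeplitz n k s δ) fun i => ?_
  have hrow := sum_bandedToeplitz_le (k := k) (abs ∘ s) (abs ∘ s) |δ|
    (fun _ => abs_nonneg _) (fun _ => abs_nonneg _) i
  have hdiag : bandedToeplitz n k s s δ i i = δ := by simp [bandedToeplitz]
  rw [← bandedToeplitz_map n k s s δ abs_zero, ← add_sum_erase _ _ (mem_univ i)] at hrow
  simp only [map_apply, hdiag, Function.comp_apply] at hrow ⊢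
  have : ∑ m ∈ Icc 1 k, (|s m| + |s m|) = ∑ m ∈ Icc 1 k, 2 * |s m| :=
    sum_congr rfl fun _ _ => (two_mul _).symm
  linarith

theorem structured_dist_upper_bound_nonpos_delta_general {n k : ℕ} (hk : k ≤ n)
    (σ τ : ℕ → ℝ) (δ : ℝ) :
    sInf {d : ℝ | ∃ s t : ℕ → ℝ, ∃ dd : ℝ,
        (bandedToeplitz n k s t dd).PosSemidef ∧
        d = frobSq (bandedToeplitz n k σ τ δ - bandedToeplitz n k s t dd)} ≤
      min ((∑ i ∈ Finset.Icc 1 k, ((n : ℝ) - i) * ((σ i)^2 + (τ i)^2)) + n * δ^2)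
        ((n : ℝ) * ((∑ i ∈ Finset.Icc 1 k, |σ i + τ i|) - δ)^2 +
          ∑ i ∈ Finset.Icc 1 k, (((n : ℝ) - i)/2) * (σ i - τ i)^2) := by
  -- `μ` and the diagonal `∑ |σ i + τ i| = δ + γ` make the second candidate `T₁* + γI`.
  set μ : ℕ → ℝ := fun i => (σ i + τ i) / 2
  refine le_min (csInf_le ⟨0, ?bdd⟩ ⟨0, 0, 0, ?_, ?_⟩)
    (csInf_le ⟨0, ?bdd⟩ ⟨μ, μ, ∑ i ∈ Icc 1 k, |σ i + τ i|, ?_, ?_⟩)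
  case bdd =>
    rintro _ ⟨s, t, dd, -, rfl⟩
    exact frobSq_nonneg _
  · rw [bandedToeplitz_zero]
    exact PosSemidef.zero
  · rw [bandedToeplitz_zero, sub_zero, frobSq_bandedToeplitz hk, add_comm]
  · refine posSemidef_bandedToeplitz n k μ _ (sum_le_sum fun i _ => ?_)
    rw [abs_div, abs_two, mul_div_cancel₀ _ two_ne_zero]
  · rw [bandedToeplitz_sub, frobSq_bandedToeplitz hk]
    congr 1
    · ring
    · exact sum_congr rfl fun i _ => by simp only [μ, Pi.sub_apply]; ring

/-- for `δ ≤ 0`, an upper bound on the squared banded-Toeplitz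
structured Frobenius distance from `T = (n;k;σ,δ,τ)` to the symmetric positive
semidefinite (2k+1)-banded Toeplitz matrices. -/
theorem structured_dist_upper_bound_nonpos_delta {n k : ℕ} (hk : k ≤ n)
    (σ τ : ℕ → ℝ) (δ : ℝ) (hδ : δ ≤ 0) :
    sInf {d : ℝ | ∃ s t : ℕ → ℝ, ∃ dd : ℝ,
        (bandedToeplitz n k s t dd).PosSemidef ∧
        d = frobSq (bandedToeplitz n k σ τ δ - bandedToeplitz n k s t dd)} ≤
      min ((∑ i ∈ Finset.Icc 1 k, ((n : ℝ) - i) * ((σ i)^2 + (τ i)^2)) + n * δ^2)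
        ((n : ℝ) * ((∑ i ∈ Finset.Icc 1 k, |σ i + τ i|) - δ)^2 +
          ∑ i ∈ Finset.Icc 1 k, (((n : ℝ) - i)/2) * (σ i - τ i)^2) :=
  structured_dist_upper_bound_nonpos_delta_general hk σ τ δ
end
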